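/- Failure of the global unique continuation property on the discrete torus: Let h > 0 (this statement uses h = 2π/(2N+1)), N ∈ ℕ and s ∈ (0,1), and let X ⊂ {−N,…,N} be a set of cardinality M with M ≤ N. Then there exists a function u = {u_j}_{j=−N}^{N}, not identically zero, such that u_j = 0 and (−Δ_{A})^s u_j = 0 for all j ∈ X. -/
import Mathlib
open scoped BigOperators
open Complex

/-- Discrete Fourier coefficient on the one-dimensional discrete torus with `2N+1` points. -/
noncomputable def dft1 (N : ℕ) (u : ℤ → ℝ) (k : ℤ) : ℂ :=
  (1 / ((2 * N + 1 : ℕ) : ℂ)) *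
    ∑ j ∈ Finset.Icc (-(N : ℤ)) (N : ℤ), (u j : ℂ) *
      Complex.exp (-(2 * Real.pi * Complex.I) * (k : ℂ) * (j : ℂ) / (2 * N + 1))

/-- The fractional Laplacian `(-Δ_A)^s` on the one-dimensional discrete torus,
defined spectrally. -/
noncomputable def torusFrac1 (N : ℕ) (h s : ℝ) (u : ℤ → ℝ) (j : ℤ) : ℂ :=
  ∑ k ∈ Finset.Icc (-(N : ℤ)) (N : ℤ),
    ((((4 / h ^ 2) * Real.sin ((k : ℝ) * Real.pi / (2 * N + 1)) ^ 2) ^ s : ℝ) : ℂ) *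
      dft1 N u k * Complex.exp ((2 * Real.pi * Complex.I) * (k : ℂ) * (j : ℂ) / (2 * N + 1))

lemma conj_dft1 (N : ℕ) (u : ℤ → ℝ) (k : ℤ) :
    (starRingEnd ℂ) (dft1 N u k) = dft1 N u (-k) := by
  unfold dft1
  rw [map_mul, map_sum]
  congr 1
  · simp [map_div₀, map_ofNat]
  refine Finset.sum_congr rfl fun j hj => ?_
  rw [map_mul, ← Complex.exp_conj]
  congr 1
  · simp
  · congr 1
    simp only [map_div₀, map_mul, map_neg, map_natCast, map_intCast, map_add, map_one, map_ofNat, Complex.conj_I,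
      Complex.conj_ofReal]
    push_cast
    ring

lemma conj_torusFrac1 (N : ℕ) (h s : ℝ) (u : ℤ → ℝ) (j : ℤ) :
    (starRingEnd ℂ) (torusFrac1 N h s u j) = torusFrac1 N h s u j := by
  unfold torusFrac1
  rw [map_sum]
  refine Finset.sum_nbij' (fun k => -k) (fun k => -k) (by simp; omega) (by simp; omega)
    (by simp) (by simp) fun k hk => ?_
  rw [map_mul, map_mul, conj_dft1]
  congr 1
  · congr 1
    · rw [Complex.conj_ofReal]
      push_cast
      rw [neg_mul, neg_div, Real.sin_neg, neg_sq]
  · rw [← Complex.exp_conj]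
    congr 1
    simp only [map_div₀, map_mul, map_natCast, map_intCast, map_add, map_one, map_ofNat, Complex.conj_I, Complex.conj_ofReal]
    push_cast
    ring

lemma dft1_add (N : ℕ) (u v : ℤ → ℝ) (k : ℤ) :
    dft1 N (u + v) k = dft1 N u k + dft1 N v k := by
  simp [dft1, add_mul, Finset.sum_add_distrib, mul_add]

lemma dft1_smul (N : ℕ) (a : ℝ) (u : ℤ → ℝ) (k : ℤ) :
    dft1 N (a • u) k = (a : ℂ) * dft1 N u k := by
  simp only [dft1, Pi.smul_apply, smul_eq_mul, Complex.ofReal_mul, Finset.mul_sum]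
  exact Finset.sum_congr rfl fun j hj => by ring

lemma torusFrac1_add (N : ℕ) (h s : ℝ) (u v : ℤ → ℝ) (j : ℤ) :
    torusFrac1 N h s (u + v) j = torusFrac1 N h s u j + torusFrac1 N h s v j := by
  simp [torusFrac1, dft1_add, mul_add, add_mul, Finset.sum_add_distrib]

lemma torusFrac1_smul (N : ℕ) (h s a : ℝ) (u : ℤ → ℝ) (j : ℤ) :
    torusFrac1 N h s (a • u) j = (a : ℂ) * torusFrac1 N h s u j := by
  simp only [torusFrac1, dft1_smul, Finset.mul_sum]
  exact Finset.sum_congr rfl fun k hk => by ring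

noncomputable def extFun (N : ℕ)
    (v : (Finset.Icc (-(N : ℤ)) (N : ℤ) : Finset ℤ) → ℝ) : ℤ → ℝ :=
  fun j => if hj : j ∈ Finset.Icc (-(N : ℤ)) (N : ℤ) then v ⟨j, hj⟩ else 0

lemma extFun_add (N : ℕ) (v w : (Finset.Icc (-(N : ℤ)) (N : ℤ) : Finset ℤ) → ℝ) :
    extFun N (v + w) = extFun N v + extFun N w := by
  funext j; simp only [extFun, Pi.add_apply]; split <;> simp

lemma extFun_smul (N : ℕ) (a : ℝ) (v : (Finset.Icc (-(N : ℤ)) (N : ℤ) : Finset ℤ) → ℝ) :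
    extFun N (a • v) = a • extFun N v := by
  funext j; simp only [extFun, Pi.smul_apply, smul_eq_mul]; split <;> simp

noncomputable def Lmap (N : ℕ) (h s : ℝ) (X : Finset ℤ) :
    ((Finset.Icc (-(N : ℤ)) (N : ℤ) : Finset ℤ) → ℝ) →ₗ[ℝ] ((X → ℝ) × (X → ℝ)) where
  toFun v := (fun j => extFun N v j.1, fun j => (torusFrac1 N h s (extFun N v) j.1).re)
  map_add' v w := by
    ext j
    · simp [extFun_add]
    · simp [extFun_add, torusFrac1_add]
  map_smul' a v := by
    ext j
    · simp [extFun_smul]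
    · simp [extFun_smul, torusFrac1_smul]

/-- Failure of the global unique continuation property on the
discrete torus: if `X ⊆ {-N,…,N}` has cardinality `M ≤ N`, there is a function `u`
on the torus, not identically zero, with `u = 0 = (-Δ_A)^s u` on `X`. -/
theorem torus_failure_global_UCP (N : ℕ) (h s : ℝ) (hh : h = 2 * Real.pi / (2 * N + 1))
    (hs : s ∈ Set.Ioo (0 : ℝ) 1) (X : Finset ℤ) (hX : X ⊆ Finset.Icc (-(N : ℤ)) (N : ℤ))
    (M : ℕ) (hM : X.card = M) (hMN : M ≤ N) :
    ∃ u : ℤ → ℝ, (∃ j ∈ Finset.Icc (-(N : ℤ)) (N : ℤ), u j ≠ 0) ∧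
      ∀ j ∈ X, u j = 0 ∧ torusFrac1 N h s u j = 0 := by
  -- kernel of Lmap is nontrivial
  have hdim : Module.finrank ℝ ((X → ℝ) × (X → ℝ)) <
      Module.finrank ℝ ((Finset.Icc (-(N : ℤ)) (N : ℤ) : Finset ℤ) → ℝ) := by
    rw [Module.finrank_prod, Module.finrank_pi, Module.finrank_pi,
      Fintype.card_coe, hM, Fintype.card_coe, Int.card_Icc]
    omega
  have hker : LinearMap.ker (Lmap N h s X) ≠ ⊥ := by
    intro hbot
    have hinj : Function.Injective (Lmap N h s X) := LinearMap.ker_eq_bot.mp hbot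
    have := LinearMap.finrank_le_finrank_of_injective hinj
    omega
  obtain ⟨v, hv, hv0⟩ := Submodule.ne_bot_iff _ |>.mp hker
  refine ⟨extFun N v, ?_, ?_⟩
  · obtain ⟨j, hj⟩ := Function.ne_iff.mp hv0
    exact ⟨j.1, j.2, by simpa [extFun] using hj⟩
  · intro j hj
    have h1 : (Lmap N h s X) v = 0 := hv
    have h2 := congrFun (congrArg Prod.fst h1) ⟨j, hj⟩
    have h3 := congrFun (congrArg Prod.snd h1) ⟨j, hj⟩
    simp only [Lmap, LinearMap.coe_mk, AddHom.coe_mk, Prod.fst, Prod.snd, Pi.zero_apply] at h2 h3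
    refine ⟨h2, ?_⟩
    have him : (torusFrac1 N h s (extFun N v) j).im = 0 :=
      Complex.conj_eq_iff_im.mp (conj_torusFrac1 N h s (extFun N v) j)
    exact Complex.ext (by simpa using h3) (by simpa using him)
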